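/- Let H(t) be the laser Hamiltonian H(t) = (ω/2)(2a†a + σ³) + i(α(t)a† - conj(α(t))a) + i(conj(β(t))σ⁻ - β(t)σ⁺) on ℓ²(ℤ₊) ⊗ ℂ². For every finitely supported x, ‖H(t)x‖² ≤ K·max(1, |α(t)|², |β(t)|²)·(‖x‖² + ‖Nx‖²) for a constant K depending only on ω, where N = a†a. -/

import Mathlib

/-! The Hamiltonian splits as `H = ωN + (ω/2)σ³ + iα a† - iᾱ a + i(β̄σ⁻ - βσ⁺)`, so on each fibre
`ℂ²` of level `n` the squared norm of `Hx` is at most five times the sum of the squared norms of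
the five terms. `σ³` is unitary and the spin term has norm `|β|` on each fibre, while
`‖a†x‖² + ‖ax‖² ≤ ⟪x, (2N + 1)x⟫ ≤ 2(‖x‖² + ‖Nx‖²)`. Finite support turns every `ℓ²`-sum into a
finite sum. -/

noncomputable def annOp (f : ℕ → Fin 2 → ℂ) : ℕ → Fin 2 → ℂ :=
  fun n i => ((Real.sqrt (n + 1) : ℝ) : ℂ) * f (n + 1) i

noncomputable def creOp (f : ℕ → Fin 2 → ℂ) : ℕ → Fin 2 → ℂ
  | 0, _ => 0
  | n + 1, i => ((Real.sqrt (n + 1) : ℝ) : ℂ) * f n i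

def spOp (f : ℕ → Fin 2 → ℂ) : ℕ → Fin 2 → ℂ :=
  fun n i => if i = 0 then f n 1 else 0

def smOp (f : ℕ → Fin 2 → ℂ) : ℕ → Fin 2 → ℂ :=
  fun n i => if i = 1 then f n 0 else 0

def s3Op (f : ℕ → Fin 2 → ℂ) : ℕ → Fin 2 → ℂ :=
  fun n i => if i = 0 then f n i else -f n i

/-- The number operator `N = a†a`. -/
def numOp (f : ℕ → Fin 2 → ℂ) : ℕ → Fin 2 → ℂ :=
  fun n i => (n : ℂ) * f n i

noncomputable def ip (f g : ℕ → Fin 2 → ℂ) : ℂ :=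
  ∑' n : ℕ, ∑ i : Fin 2, (starRingEnd ℂ) (f n i) * g n i

/-- The Hamiltonian `H(t) = (ω/2)(2a†a + σ³) + i(αa† - conj(α)a) + i(conj(β)σ⁻ - βσ⁺)`. -/
noncomputable def laserH (ω : ℝ) (α β : ℂ) (f : ℕ → Fin 2 → ℂ) : ℕ → Fin 2 → ℂ :=
  fun n i =>
    ((ω / 2 : ℝ) : ℂ) * (2 * (n : ℂ) * f n i + s3Op f n i) +
      Complex.I * (α * creOp f n i - (starRingEnd ℂ) α * annOp f n i) +
      Complex.I * ((starRingEnd ℂ) β * smOp f n i - β * spOp f n i)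

open Finset ComplexConjugate

noncomputable def fiberNormSq (g : ℕ → Fin 2 → ℂ) (n : ℕ) : ℝ := ∑ i, ‖g n i‖ ^ 2

lemma fiberNormSq_nonneg (g : ℕ → Fin 2 → ℂ) (n : ℕ) : 0 ≤ fiberNormSq g n :=
  sum_nonneg fun _ _ => sq_nonneg _

lemma re_ip_self_eq_sum_range {g : ℕ → Fin 2 → ℂ} {M : ℕ} (hg : ∀ n ≥ M, g n = 0) :
    (ip g g).re = ∑ n ∈ range M, fiberNormSq g n := by
  have hfiber : ∀ n, ∑ i, conj (g n i) * g n i = (fiberNormSq g n : ℂ) := by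
    simp [fiberNormSq, Complex.conj_mul']
  rw [ip, tsum_eq_sum (s := range M) fun n hn => by simp [hg n (by simpa using hn)]]
  simp [hfiber, ← Complex.ofReal_sum]

lemma fiberNormSq_smul (c : ℂ) (g : ℕ → Fin 2 → ℂ) (n : ℕ) :
    fiberNormSq (c • g) n = ‖c‖ ^ 2 * fiberNormSq g n := by
  simp [fiberNormSq, Fin.sum_univ_two, mul_pow, mul_add]

lemma fiberNormSq_numOp (f : ℕ → Fin 2 → ℂ) (n : ℕ) :
    fiberNormSq (numOp f) n = (n : ℝ) ^ 2 * fiberNormSq f n := by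
  simp [fiberNormSq, numOp, Fin.sum_univ_two, mul_pow, mul_add]

lemma fiberNormSq_s3Op (f : ℕ → Fin 2 → ℂ) (n : ℕ) : fiberNormSq (s3Op f) n = fiberNormSq f n := by
  simp [fiberNormSq, s3Op, Fin.sum_univ_two]

lemma fiberNormSq_creOp_zero (f : ℕ → Fin 2 → ℂ) : fiberNormSq (creOp f) 0 = 0 := by
  simp [fiberNormSq, creOp]

lemma fiberNormSq_creOp_succ (f : ℕ → Fin 2 → ℂ) (n : ℕ) :
    fiberNormSq (creOp f) (n + 1) = (n + 1) * fiberNormSq f n := by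
  have hn : (0 : ℝ) ≤ n + 1 := by positivity
  simp [fiberNormSq, creOp, Fin.sum_univ_two, mul_pow, mul_add, Real.sq_sqrt hn]

lemma fiberNormSq_annOp (f : ℕ → Fin 2 → ℂ) (n : ℕ) :
    fiberNormSq (annOp f) n = (n + 1) * fiberNormSq f (n + 1) := by
  have hn : (0 : ℝ) ≤ n + 1 := by positivity
  simp [fiberNormSq, annOp, Fin.sum_univ_two, mul_pow, mul_add, Real.sq_sqrt hn]

lemma fiberNormSq_spin (β : ℂ) (f : ℕ → Fin 2 → ℂ) (n : ℕ) :
    fiberNormSq (conj β • smOp f - β • spOp f) n = ‖β‖ ^ 2 * fiberNormSq f n := by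
  simp [fiberNormSq, smOp, spOp, Fin.sum_univ_two, mul_pow, mul_add, add_comm]

lemma norm_sum_sq_le_card_mul {ι E : Type*} [SeminormedAddCommGroup E] (s : Finset ι) (z : ι → E) :
    ‖∑ i ∈ s, z i‖ ^ 2 ≤ #s * ∑ i ∈ s, ‖z i‖ ^ 2 :=
  (pow_le_pow_left₀ (norm_nonneg _) (norm_sum_le s z) 2).trans sq_sum_le_card_mul_sum_sq

lemma fiberNormSq_add_five_le (a b c d e : ℕ → Fin 2 → ℂ) (n : ℕ) :
    fiberNormSq (a + b + c + d + e) n ≤ 5 * (fiberNormSq a n + fiberNormSq b n +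
      fiberNormSq c n + fiberNormSq d n + fiberNormSq e n) := by
  have h (i : Fin 2) : ‖a n i + b n i + c n i + d n i + e n i‖ ^ 2 ≤ 5 * (‖a n i‖ ^ 2 +
      ‖b n i‖ ^ 2 + ‖c n i‖ ^ 2 + ‖d n i‖ ^ 2 + ‖e n i‖ ^ 2) := by
    simpa [Fin.sum_univ_five] using
      norm_sum_sq_le_card_mul univ ![a n i, b n i, c n i, d n i, e n i]
  simp only [fiberNormSq, Fin.sum_univ_two, Pi.add_apply]
  linarith [h 0, h 1]

lemma laserH_eq (ω : ℝ) (α β : ℂ) (f : ℕ → Fin 2 → ℂ) :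
    laserH ω α β f = (ω : ℂ) • numOp f + ((ω / 2 : ℝ) : ℂ) • s3Op f + (Complex.I * α) • creOp f +
      (-(Complex.I * conj α)) • annOp f + Complex.I • (conj β • smOp f - β • spOp f) := by
  ext n i
  simp only [laserH, numOp, Pi.add_apply, Pi.smul_apply, Pi.sub_apply, smul_eq_mul]
  push_cast
  ring

lemma fiberNormSq_laserH_le (ω : ℝ) (α β : ℂ) (f : ℕ → Fin 2 → ℂ) (n : ℕ) :
    fiberNormSq (laserH ω α β f) n ≤ 5 * ((ω ^ 2 * n ^ 2 + ω ^ 2 / 4 + ‖β‖ ^ 2) * fiberNormSq f n +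
      ‖α‖ ^ 2 * (fiberNormSq (creOp f) n + fiberNormSq (annOp f) n)) := by
  rw [laserH_eq]
  refine (fiberNormSq_add_five_le _ _ _ _ _ n).trans (le_of_eq ?_)
  simp only [fiberNormSq_smul, fiberNormSq_numOp, fiberNormSq_s3Op, fiberNormSq_spin, norm_neg,
    norm_mul, Complex.norm_I, Complex.norm_conj, Complex.norm_real, Real.norm_eq_abs, sq_abs]
  ring

lemma sum_range_fiberNormSq_creOp_le (f : ℕ → Fin 2 → ℂ) (M : ℕ) :
    ∑ n ∈ range M, fiberNormSq (creOp f) n ≤ ∑ n ∈ range M, (n + 1) * fiberNormSq f n := by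
  cases M with
  | zero => simp
  | succ M =>
    rw [sum_range_succ', sum_range_succ]
    simp only [fiberNormSq_creOp_zero, fiberNormSq_creOp_succ, add_zero]
    exact le_add_of_nonneg_right (mul_nonneg (by positivity) (fiberNormSq_nonneg f M))

lemma sum_range_fiberNormSq_annOp {f : ℕ → Fin 2 → ℂ} {M : ℕ} (hf : ∀ n ≥ M, f n = 0) :
    ∑ n ∈ range M, fiberNormSq (annOp f) n = ∑ n ∈ range M, n * fiberNormSq f n := by
  have hM : fiberNormSq f M = 0 := by simp [fiberNormSq, hf M le_rfl]
  calc ∑ n ∈ range M, fiberNormSq (annOp f) n = ∑ n ∈ range (M + 1), n * fiberNormSq f n := by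
        simp [sum_range_succ', fiberNormSq_annOp]
    _ = _ := by simp [sum_range_succ, hM]

lemma sum_range_fiberNormSq_creOp_add_annOp_le {f : ℕ → Fin 2 → ℂ} {M : ℕ}
    (hf : ∀ n ≥ M, f n = 0) :
    ∑ n ∈ range M, (fiberNormSq (creOp f) n + fiberNormSq (annOp f) n) ≤
      ∑ n ∈ range M, (2 * n + 1) * fiberNormSq f n := by
  rw [sum_add_distrib, sum_range_fiberNormSq_annOp hf]
  calc _ ≤ ∑ n ∈ range M, (n + 1) * fiberNormSq f n + ∑ n ∈ range M, n * fiberNormSq f n :=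
        add_le_add_left (sum_range_fiberNormSq_creOp_le f M) _
    _ = _ := by rw [← sum_add_distrib]; congr! 1 with n; ring

lemma sum_range_fiberNormSq_laserH_le (ω : ℝ) (α β : ℂ) {f : ℕ → Fin 2 → ℂ} {M : ℕ}
    (hf : ∀ n ≥ M, f n = 0) :
    ∑ n ∈ range M, fiberNormSq (laserH ω α β f) n ≤
      5 * ∑ n ∈ range M,
        (ω ^ 2 * n ^ 2 + ω ^ 2 / 4 + ‖β‖ ^ 2 + ‖α‖ ^ 2 * (2 * n + 1)) * fiberNormSq f n := by
  calc ∑ n ∈ range M, fiberNormSq (laserH ω α β f) n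
      ≤ 5 * (∑ n ∈ range M, (ω ^ 2 * n ^ 2 + ω ^ 2 / 4 + ‖β‖ ^ 2) * fiberNormSq f n +
          ‖α‖ ^ 2 * ∑ n ∈ range M, (fiberNormSq (creOp f) n + fiberNormSq (annOp f) n)) := by
        simp only [mul_sum, ← sum_add_distrib]
        exact sum_le_sum fun n _ => fiberNormSq_laserH_le ω α β f n
    _ ≤ 5 * (∑ n ∈ range M, (ω ^ 2 * n ^ 2 + ω ^ 2 / 4 + ‖β‖ ^ 2) * fiberNormSq f n +
          ‖α‖ ^ 2 * ∑ n ∈ range M, (2 * n + 1) * fiberNormSq f n) := by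
        gcongr 5 * (_ + _ * ?_)
        exact sum_range_fiberNormSq_creOp_add_annOp_le hf
    _ = _ := by
        simp only [mul_sum, ← sum_add_distrib]
        congr! 2 with n
        ring

lemma laserH_eq_zero_of_ge (ω : ℝ) (α β : ℂ) {f : ℕ → Fin 2 → ℂ} {M : ℕ}
    (hf : ∀ n ≥ M, f n = 0) : ∀ n ≥ M + 1, laserH ω α β f n = 0 := by
  intro n hn
  obtain ⟨k, rfl⟩ : ∃ k, n = k + 1 := ⟨n - 1, by omega⟩
  ext i
  simp [laserH, s3Op, smOp, spOp, annOp, creOp, hf k (by omega), hf (k + 1) (by omega),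
    hf (k + 2) (by omega)]

lemma exists_forall_ge_eq_zero_of_finite_support {X : Type*} [Zero X] {f : ℕ → X}
    (hf : (Function.support f).Finite) : ∃ M, ∀ n ≥ M, f n = 0 := by
  obtain ⟨M, hM⟩ := Filter.eventually_atTop.1 (Nat.cofinite_eq_atTop ▸ hf.compl_mem_cofinite)
  exact ⟨M, fun n hn => Function.notMem_support.1 (hM n hn)⟩

lemma laser_weight_le (ω a b x : ℝ) (hx : 0 ≤ x) :
    ω ^ 2 * x ^ 2 + ω ^ 2 / 4 + b + a * (2 * x + 1) ≤
      (ω ^ 2 + 3) * max 1 (max a b) * (1 + x ^ 2) := by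
  have hm1 : 1 ≤ max 1 (max a b) := le_max_left _ _
  have ha : a ≤ max 1 (max a b) := (le_max_left _ _).trans (le_max_right _ _)
  have hb : b ≤ max 1 (max a b) := (le_max_right _ _).trans (le_max_right _ _)
  nlinarith [mul_le_mul_of_nonneg_left hm1 (by positivity : 0 ≤ ω ^ 2 * (1 + x ^ 2)),
    mul_le_mul_of_nonneg_right ha (by positivity : 0 ≤ 2 * x + 1),
    mul_le_mul_of_nonneg_left hm1 (sq_nonneg (x - 1)), sq_nonneg (x - 1)]

/-- Relative bound of the laser Hamiltonian with respect to the number operator: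
`‖H(t)x‖² ≤ K max(1,|α|²,|β|²)(‖x‖² + ‖Nx‖²)` with `K` depending only on `ω`. -/
theorem laserH_relatively_bounded (ω : ℝ) :
    ∃ K : ℝ, ∀ (α β : ℂ) (f : ℕ → Fin 2 → ℂ), (Function.support f).Finite →
      (ip (laserH ω α β f) (laserH ω α β f)).re ≤
        K * max 1 (max (‖α‖ ^ 2) (‖β‖ ^ 2)) *
          ((ip f f).re + (ip (numOp f) (numOp f)).re) := by
  refine ⟨5 * (ω ^ 2 + 3), fun α β f hf => ?_⟩
  obtain ⟨M, hM⟩ := exists_forall_ge_eq_zero_of_finite_support hf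
  have hM' : ∀ n ≥ M + 1, f n = 0 := fun n hn => hM n (by omega)
  have hNf : ∀ n ≥ M + 1, numOp f n = 0 := fun n hn => by ext i; simp [numOp, hM' n hn]
  rw [re_ip_self_eq_sum_range (laserH_eq_zero_of_ge ω α β hM), re_ip_self_eq_sum_range hM',
    re_ip_self_eq_sum_range hNf]
  calc _ ≤ _ := sum_range_fiberNormSq_laserH_le ω α β hM'
    _ ≤ 5 * ∑ n ∈ range (M + 1),
          (ω ^ 2 + 3) * max 1 (max (‖α‖ ^ 2) (‖β‖ ^ 2)) * (1 + n ^ 2) * fiberNormSq f n := by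
        gcongr with n
        · exact fiberNormSq_nonneg f n
        · exact laser_weight_le ω _ _ n n.cast_nonneg
    _ = _ := by simp only [fiberNormSq_numOp, mul_sum, ← sum_add_distrib]; congr! 1 with n; ring
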